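/- In the free unital associative ring ℤ⟨X⟩, for all elements a₁,...,a₅, the element [a₁,a₂,a₃][a₄,a₅] + [a₁,a₄,a₃][a₂,a₅] lies in the ideal T⁽⁴⁾. -/

import Mathlib

/-!
Pass to `A = ℤ⟨X⟩ / T⁽⁴⁾`, a ring in which every commutator of length 4 vanishes, and write
`W(a,b,c,d,e) = [a,b,c][d,e]` there. Triple commutators are central in `A`. Expanding
`[a,b,cd,e] = 0` by the Leibniz rule shows that `W` is skew in its third and fourth arguments,
hence (being skew in the last two as well) skew under the swap of the third and fifth.
Expanding `[xy,z,e,f] = 0` gives eight terms; two vanish, and the centrality of triple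
commutators together with the previous skew-symmetry leaves `W(x,e,f,y,z) + W(y,e,f,x,z) = 0`.
Combined with `[a,b] = -[b,a]` this is exactly the claim.
-/

noncomputable section

/-- `ℤ⟨X⟩`, the free unital associative ring on a countable set `X = {x₀, x₁, …}`. -/
abbrev R : Type := FreeAlgebra ℤ ℕ

/-- The commutator `[a,b] = ab - ba`. -/
def br (a b : R) : R := a * b - b * a

/-- `T⁽⁴⁾`: the two-sided ideal generated by all left-normed commutators of length 4. -/
def T4 : TwoSidedIdeal R := TwoSidedIdeal.span {y | ∃ a b c d : R, y = br (br (br a b) c) d}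

theorem RingHom.map_lie {A B : Type*} [Ring A] [Ring B] (f : A →+* B) (a b : A) :
    f ⁅a, b⁆ = ⁅f a, f b⁆ := by
  simp [Ring.lie_def]

section LieNilpotentOfClassThree

variable {A : Type*} [Ring A]

attribute [local instance] LieRing.ofAssociativeRing

theorem lie_lie_lie_mul (x y z e f : A) :
    ⁅⁅⁅x * y, z⁆, e⁆, f⁆ = x * ⁅⁅⁅y, z⁆, e⁆, f⁆ + ⁅x, f⁆ * ⁅⁅y, z⁆, e⁆ + ⁅⁅x, e⁆, f⁆ * ⁅y, z⁆
      + ⁅x, e⁆ * ⁅⁅y, z⁆, f⁆ + ⁅⁅x, z⁆, f⁆ * ⁅y, e⁆ + ⁅x, z⁆ * ⁅⁅y, e⁆, f⁆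
      + ⁅⁅⁅x, z⁆, e⁆, f⁆ * y + ⁅⁅x, z⁆, e⁆ * ⁅y, f⁆ := by
  simp only [Ring.lie_def]
  noncomm_ring

theorem lie_lie_mul_lie_add_lie_lie_mul_lie_eq (a b c d e : A) :
    ⁅⁅a, b⁆, c⁆ * ⁅d, e⁆ + ⁅⁅a, b⁆, d⁆ * ⁅c, e⁆ =
      ⁅⁅⁅a, b⁆, c * d⁆, e⁆ - c * ⁅⁅⁅a, b⁆, d⁆, e⁆ - ⁅⁅⁅a, b⁆, c⁆, e⁆ * d
        + ⁅⁅⁅a, b⁆, d⁆, ⁅c, e⁆⁆ := by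
  simp only [Ring.lie_def]
  noncomm_ring

variable (h : ∀ a b c d : A, ⁅⁅⁅a, b⁆, c⁆, d⁆ = 0)
include h

theorem lie_lie_mul_comm (a b c x : A) : ⁅⁅a, b⁆, c⁆ * x = x * ⁅⁅a, b⁆, c⁆ :=
  sub_eq_zero.mp ((Ring.lie_def _ _).symm.trans (h a b c x))

theorem lie_lie_mul_lie_swap_three_four (a b c d e : A) :
    ⁅⁅a, b⁆, c⁆ * ⁅d, e⁆ = -(⁅⁅a, b⁆, d⁆ * ⁅c, e⁆) :=
  eq_neg_of_add_eq_zero_left <| by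
    rw [lie_lie_mul_lie_add_lie_lie_mul_lie_eq, h, h, h, h]
    simp

theorem lie_lie_mul_lie_swap_three_five (a b c d e : A) :
    ⁅⁅a, b⁆, c⁆ * ⁅d, e⁆ = -(⁅⁅a, b⁆, e⁆ * ⁅d, c⁆) := by
  rw [lie_lie_mul_lie_swap_three_four h, ← lie_skew c e, mul_neg, neg_neg,
    lie_lie_mul_lie_swap_three_four h]

theorem lie_lie_mul_lie_swap_one_four (x y z e f : A) :
    ⁅⁅x, e⁆, f⁆ * ⁅y, z⁆ = -(⁅⁅y, e⁆, f⁆ * ⁅x, z⁆) := by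
  have expand := lie_lie_lie_mul x y z e f
  rw [h, h, h, mul_zero, zero_add, zero_mul, add_zero, ← lie_lie_mul_comm h y z e,
    ← lie_lie_mul_comm h y z f, ← lie_lie_mul_comm h y e f,
    lie_lie_mul_lie_swap_three_five h y z f x e, lie_lie_mul_lie_swap_three_five h x z f y e] at expand
  refine eq_neg_of_add_eq_zero_left (Eq.trans ?_ expand.symm)
  abel

theorem lie_lie_mul_lie_add_lie_lie_mul_lie_eq_zero (a₁ a₂ a₃ a₄ a₅ : A) :
    ⁅⁅a₁, a₂⁆, a₃⁆ * ⁅a₄, a₅⁆ + ⁅⁅a₁, a₄⁆, a₃⁆ * ⁅a₂, a₅⁆ = 0 := by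
  rw [← lie_skew a₁ a₂, neg_lie, neg_mul, lie_lie_mul_lie_swap_one_four h a₂ a₄ a₅ a₁ a₃,
    ← lie_skew a₄ a₁, neg_lie, neg_mul]
  abel

end LieNilpotentOfClassThree

theorem stmt1 (a₁ a₂ a₃ a₄ a₅ : R) :
    br (br a₁ a₂) a₃ * br a₄ a₅ + br (br a₁ a₄) a₃ * br a₂ a₅ ∈ T4 := by
  have br_eq_lie (a b : R) : br a b = ⁅a, b⁆ := (Ring.lie_def a b).symm
  set π := T4.ringCon.mk'
  have mem_iff (x : R) : x ∈ T4 ↔ π x = 0 := by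
    rw [← TwoSidedIdeal.mem_ker, TwoSidedIdeal.ker_ringCon_mk']
  rw [mem_iff]
  simp only [br_eq_lie, map_add, map_mul, RingHom.map_lie]
  refine lie_lie_mul_lie_add_lie_lie_mul_lie_eq_zero (fun a b c d ↦ ?_) _ _ _ _ _
  obtain ⟨a, rfl⟩ := T4.ringCon.mk'_surjective a
  obtain ⟨b, rfl⟩ := T4.ringCon.mk'_surjective b
  obtain ⟨c, rfl⟩ := T4.ringCon.mk'_surjective c
  obtain ⟨d, rfl⟩ := T4.ringCon.mk'_surjective d
  simp only [← RingHom.map_lie, ← br_eq_lie]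
  rw [← mem_iff]
  exact TwoSidedIdeal.subset_span ⟨a, b, c, d, rfl⟩
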